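/- Let A and B be positive semidefinite operators on a finite-dimensional complex Hilbert space, and let s ∈ [0,1]. Then (1/2)(Tr[A + B] − ‖A − B‖₁) ≤ Tr[Aˢ B^{1−s}], where ‖·‖₁ denotes the trace norm. -/

import Mathlib

open Matrix ComplexOrder

/-- `Matrix.PosSemidef.sqrt` as it was defined in Mathlib (Dec 2024); removed since. -/
noncomputable def Matrix.PosSemidef.sqrt {n : Type*} [Fintype n] [DecidableEq n]
    {A : Matrix n n ℂ} (hA : A.PosSemidef) : Matrix n n ℂ :=
  hA.1.eigenvectorUnitary.1 * diagonal ((↑) ∘ (√·) ∘ hA.1.eigenvalues) *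
    (star hA.1.eigenvectorUnitary : Matrix n n ℂ)

noncomputable def traceNorm {n : ℕ} (X : Matrix (Fin n) (Fin n) ℂ) : ℝ :=
  ((Matrix.posSemidef_conjTranspose_mul_self X).sqrt.trace).re

noncomputable def mpow {n : ℕ} {A : Matrix (Fin n) (Fin n) ℂ} (hA : A.PosSemidef) (s : ℝ) :
    Matrix (Fin n) (Fin n) ℂ :=
  hA.1.cfc (fun x => if x = 0 then 0 else x ^ s)

namespace Aud
variable {n : ℕ}

local notation "M" => Matrix (Fin n) (Fin n) ℂ

noncomputable def cfcH {A : M} (hA : A.IsHermitian) (f : ℝ → ℝ) : M := hA.cfc f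

lemma star_coe_unitary {A : M} (hA : A.IsHermitian) :
    star (hA.eigenvectorUnitary : M) * (hA.eigenvectorUnitary : M) = 1 :=
  Unitary.coe_star_mul_self _

lemma coe_unitary_star {A : M} (hA : A.IsHermitian) :
    (hA.eigenvectorUnitary : M) * star (hA.eigenvectorUnitary : M) = 1 :=
  Unitary.coe_mul_star_self _

lemma diag_comp (f : ℝ → ℝ) (ev : Fin n → ℝ) :
    (RCLike.ofReal ∘ f ∘ ev : Fin n → ℂ) = fun i => ((f (ev i) : ℝ) : ℂ) := rfl

lemma cfcH_mul {A : M} (hA : A.IsHermitian) (f g : ℝ → ℝ) :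
    cfcH hA f * cfcH hA g = cfcH hA (fun x => f x * g x) := by
  unfold cfcH Matrix.IsHermitian.cfc
  simp only [Unitary.conjStarAlgAut_apply]
  set U : M := (hA.eigenvectorUnitary : M) with hU
  have hsU : star U * U = 1 := star_coe_unitary hA
  simp only [← mul_assoc]
  rw [mul_assoc (U * diagonal (RCLike.ofReal ∘ f ∘ hA.eigenvalues)) (star U) U, hsU, mul_one,
    mul_assoc U, diagonal_mul_diagonal]
  congr 2
  exact congrArg _ (funext fun i => by simp [Function.comp])

lemma cfcH_add {A : M} (hA : A.IsHermitian) (f g : ℝ → ℝ) :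
    cfcH hA f + cfcH hA g = cfcH hA (fun x => f x + g x) := by
  unfold cfcH Matrix.IsHermitian.cfc
  simp only [Unitary.conjStarAlgAut_apply]
  rw [← add_mul, ← mul_add, diagonal_add]
  congr 2
  exact congrArg _ (funext fun i => by simp [Function.comp])

lemma cfcH_sub {A : M} (hA : A.IsHermitian) (f g : ℝ → ℝ) :
    cfcH hA f - cfcH hA g = cfcH hA (fun x => f x - g x) := by
  unfold cfcH Matrix.IsHermitian.cfc
  simp only [Unitary.conjStarAlgAut_apply]
  rw [← sub_mul, ← mul_sub, diagonal_sub]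
  congr 2
  exact congrArg _ (funext fun i => by simp [Function.comp])

lemma cfcH_id {A : M} (hA : A.IsHermitian) : cfcH hA (fun x => x) = A := by
  unfold cfcH Matrix.IsHermitian.cfc
  exact hA.spectral_theorem.symm

lemma cfcH_one {A : M} (hA : A.IsHermitian) : cfcH hA (fun _ => 1) = 1 := by
  unfold cfcH Matrix.IsHermitian.cfc
  simp only [Unitary.conjStarAlgAut_apply]
  have : diagonal (RCLike.ofReal ∘ (fun _ : ℝ => (1:ℝ)) ∘ hA.eigenvalues) = (1 : M) := by
    have h : (RCLike.ofReal ∘ (fun _ : ℝ => (1:ℝ)) ∘ hA.eigenvalues) = fun _ : Fin n => (1:ℂ) := by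
      funext i; simp
    rw [h, diagonal_one]
  rw [this, mul_one, coe_unitary_star]

lemma cfcH_congr {A : M} (hA : A.IsHermitian) {f g : ℝ → ℝ}
    (h : ∀ i, f (hA.eigenvalues i) = g (hA.eigenvalues i)) : cfcH hA f = cfcH hA g := by
  unfold cfcH Matrix.IsHermitian.cfc
  congr 2
  exact congrArg _ (funext fun i => by simp [Function.comp, h i])

lemma cfcH_posSemidef {A : M} (hA : A.IsHermitian) {f : ℝ → ℝ}
    (h : ∀ i, 0 ≤ f (hA.eigenvalues i)) : (cfcH hA f).PosSemidef := by
  unfold cfcH Matrix.IsHermitian.cfc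
  have hd : (diagonal (RCLike.ofReal ∘ f ∘ hA.eigenvalues) : M).PosSemidef := by
    refine Matrix.posSemidef_diagonal_iff.mpr fun i => ?_
    simpa [Function.comp] using Complex.zero_le_real.mpr (h i)
  have := hd.mul_mul_conjTranspose_same (hA.eigenvectorUnitary : M)
  rwa [← Matrix.star_eq_conjTranspose] at this

lemma cfcH_herm {A : M} (hA : A.IsHermitian) (f : ℝ → ℝ) : (cfcH hA f).IsHermitian := by
  have h1 := (cfcH_posSemidef hA (f := fun x => max (f x) 0) (fun i => le_max_right _ _)).1
  have h2 := (cfcH_posSemidef hA (f := fun x => max (-f x) 0) (fun i => le_max_right _ _)).1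
  have h3 := h1.sub h2
  rw [cfcH_sub] at h3
  have : (fun x => max (f x) 0 - max (-f x) 0) = f := by
    funext x
    rcases le_total (f x) 0 with h | h
    · simp [max_eq_right h, max_eq_left (neg_nonneg.mpr h)]
    · simp [max_eq_left h, max_eq_right (neg_nonpos.mpr h)]
  rwa [this] at h3

lemma cfcH_trace {A : M} (hA : A.IsHermitian) (f : ℝ → ℝ) :
    (cfcH hA f).trace = ∑ i, ((f (hA.eigenvalues i) : ℝ) : ℂ) := by
  unfold cfcH Matrix.IsHermitian.cfc
  simp only [Unitary.conjStarAlgAut_apply]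
  rw [Matrix.trace_mul_cycle, star_coe_unitary, one_mul, Matrix.trace_diagonal]
  simp [Function.comp]

lemma cfcH_trace_re {A : M} (hA : A.IsHermitian) (f : ℝ → ℝ) :
    ((cfcH hA f).trace).re = ∑ i, f (hA.eigenvalues i) := by
  rw [cfcH_trace, Complex.re_sum]
  simp


/-- Loewner order -/
def pLE (A B : M) : Prop := (B - A).PosSemidef

lemma pLE.trans {A B C : M} (h1 : pLE A B) (h2 : pLE B C) : pLE A C := by
  have := h2.add h1
  simpa [pLE, sub_add_sub_cancel] using this

lemma pLE.conj {X Y : M} (h : pLE X Y) (C : M) : pLE (Cᴴ * X * C) (Cᴴ * Y * C) := by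
  have := h.conjTranspose_mul_mul_same C
  unfold pLE
  rwa [mul_sub, sub_mul] at this

lemma psd_diag_re_nonneg {X : M} (hX : X.PosSemidef) (i : Fin n) : 0 ≤ (X i i).re := by
  have h := hX.dotProduct_mulVec_nonneg (Pi.single i 1)
  have : star (Pi.single i 1 : Fin n → ℂ) ⬝ᵥ X *ᵥ (Pi.single i 1) = X i i := by
    simp [dotProduct, Matrix.mulVec, Pi.single_apply, Finset.sum_ite_eq,
      dotProduct]
  rw [this] at h
  exact (Complex.le_def.mp h).1

lemma psd_trace_re_nonneg {X : M} (hX : X.PosSemidef) : 0 ≤ (X.trace).re := by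
  rw [Matrix.trace, Complex.re_sum]
  exact Finset.sum_nonneg fun i _ => psd_diag_re_nonneg hX i

lemma sqrt_eq_cfcH {X : M} (hX : X.PosSemidef) : hX.sqrt = cfcH hX.1 (fun x => √x) := by
  unfold Matrix.PosSemidef.sqrt cfcH Matrix.IsHermitian.cfc
  simp only [Unitary.conjStarAlgAut_apply]
  rfl

theorem _root_.Matrix.PosSemidef.sqrt_mul_self {X : M} (hX : X.PosSemidef) :
    hX.sqrt * hX.sqrt = X := by
  rw [sqrt_eq_cfcH, cfcH_mul]
  conv_rhs => rw [← cfcH_id hX.1]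
  exact cfcH_congr _ fun i => Real.mul_self_sqrt (hX.eigenvalues_nonneg i)

theorem _root_.Matrix.PosSemidef.posSemidef_sqrt {X : M} (hX : X.PosSemidef) :
    hX.sqrt.PosSemidef := by
  rw [sqrt_eq_cfcH]
  exact cfcH_posSemidef _ fun i => Real.sqrt_nonneg _

lemma psd_trace_mul_re_nonneg {X Y : M} (hX : X.PosSemidef) (hY : Y.PosSemidef) :
    0 ≤ ((X * Y).trace).re := by
  have h1 : X * Y = hX.sqrt * (hX.sqrt * Y) := by
    rw [← mul_assoc, hX.sqrt_mul_self]
  rw [h1, Matrix.trace_mul_comm]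
  have h2 : hX.sqrt * Y * hX.sqrt = hX.sqrt * Y * (hX.sqrt)ᴴ := by
    rw [hX.posSemidef_sqrt.1]
  rw [h2]
  exact psd_trace_re_nonneg (hY.mul_mul_conjTranspose_same hX.sqrt)

lemma trace_mul_mono {X Y Z : M} (h : pLE X Y) (hZ : Z.PosSemidef) :
    ((X * Z).trace).re ≤ ((Y * Z).trace).re := by
  have h0 := psd_trace_mul_re_nonneg h hZ
  have : (Y - X) * Z = Y * Z - X * Z := by rw [sub_mul]
  rw [this, Matrix.trace_sub, Complex.sub_re] at h0
  linarith

lemma trace_mul_mono' {X Y Z : M} (h : pLE X Y) (hZ : Z.PosSemidef) :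
    ((Z * X).trace).re ≤ ((Z * Y).trace).re := by
  rw [Matrix.trace_mul_comm Z X, Matrix.trace_mul_comm Z Y]
  exact trace_mul_mono h hZ


/-! ### power function and mpow -/

noncomputable def fpow (s : ℝ) : ℝ → ℝ := fun x => if x = 0 then 0 else x ^ s

noncomputable def mpowH {A : M} (hA : A.PosSemidef) (s : ℝ) : M := cfcH hA.1 (fpow s)

lemma mpowH_herm {A : M} (hA : A.PosSemidef) (s : ℝ) : (mpowH hA s).IsHermitian :=
  cfcH_herm _ _

lemma mpowH_psd {A : M} (hA : A.PosSemidef) (s : ℝ) : (mpowH hA s).PosSemidef := by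
  refine cfcH_posSemidef _ fun i => ?_
  unfold fpow
  split
  · exact le_refl 0
  · exact Real.rpow_nonneg (hA.eigenvalues_nonneg i) s

lemma mpowH_mul_mpowH {A : M} (hA : A.PosSemidef) (s t : ℝ) :
    mpowH hA s * mpowH hA t = mpowH hA (s + t) := by
  unfold mpowH
  rw [cfcH_mul]
  refine cfcH_congr _ fun i => ?_
  have h := hA.eigenvalues_nonneg i
  unfold fpow
  rcases eq_or_lt_of_le h with h0 | h0
  · simp [← h0]
  · rw [if_neg (ne_of_gt h0), if_neg (ne_of_gt h0), if_neg (ne_of_gt h0),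
      ← Real.rpow_add h0]

lemma mpowH_one {A : M} (hA : A.PosSemidef) : mpowH hA 1 = A := by
  unfold mpowH
  have h2 : cfcH hA.1 (fpow 1) = cfcH hA.1 (fun x => x) := by
    refine cfcH_congr _ fun i => ?_
    unfold fpow
    split
    · simp_all
    · exact Real.rpow_one _
  exact h2.trans (cfcH_id hA.1)

/-! ### eigenvector extraction -/

lemma dot_star_self (v : Fin n → ℂ) :
    star v ⬝ᵥ v = ((∑ i, Complex.normSq (v i) : ℝ) : ℂ) := by
  simp only [dotProduct, Pi.star_apply, RCLike.star_def, Complex.ofReal_sum]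
  exact Finset.sum_congr rfl fun i _ => by rw [Complex.normSq_eq_conj_mul_self]

lemma dot_star_self_pos {v : Fin n → ℂ} (hv : v ≠ 0) :
    0 < ∑ i, Complex.normSq (v i) := by
  have h1 : ∀ i, 0 ≤ Complex.normSq (v i) := fun i => Complex.normSq_nonneg _
  obtain ⟨i, hi⟩ : ∃ i, v i ≠ 0 := by
    by_contra h
    push_neg at h
    exact hv (funext h)
  exact Finset.sum_pos' (fun i _ => h1 i) ⟨i, Finset.mem_univ i, Complex.normSq_pos.mpr hi⟩

lemma exists_eigenvector {A : M} (hA : A.IsHermitian) (i : Fin n) :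
    ∃ v : Fin n → ℂ, v ≠ 0 ∧ A *ᵥ v = (hA.eigenvalues i : ℂ) • v := by
  refine ⟨(WithLp.equiv 2 _) (hA.eigenvectorBasis i), ?_, ?_⟩
  · intro h
    exact hA.eigenvectorBasis.orthonormal.ne_zero i ((WithLp.equiv 2 _).injective
      (by simpa using h))
  · rw [WithLp.equiv_apply, hA.mulVec_eigenvectorBasis i]
    funext j
    simp [Complex.real_smul]

lemma posDef_eigenvalues_pos {A : M} (hA : A.PosDef) (i : Fin n) :
    0 < hA.1.eigenvalues i := by
  rcases eq_or_lt_of_le (hA.posSemidef.eigenvalues_nonneg i) with h0 | h0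
  · exfalso
    obtain ⟨v, hv, hAv⟩ := exists_eigenvector hA.1 i
    have := hA.dotProduct_mulVec_pos hv
    rw [hAv, ← h0] at this
    simp at this
  · exact h0

/-! ### psd comparisons with 1 -/

lemma pLE_one_of_eigen {H : M} (hH : H.PosSemidef) (h : ∀ i, hH.1.eigenvalues i ≤ 1) :
    pLE H 1 := by
  unfold pLE
  have h1 : cfcH hH.1 (fun x => 1 - x) = (1 : M) - H := by
    rw [← cfcH_sub hH.1 (fun _ => 1) (fun x => x), cfcH_one, cfcH_id]
  rw [← h1]
  exact cfcH_posSemidef _ fun i => by linarith [h i]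

lemma quad_le_of_pLE_one {X : M} (h : pLE X 1) (v : Fin n → ℂ) :
    star v ⬝ᵥ (X *ᵥ v) ≤ star v ⬝ᵥ v := by
  have h0 := h.dotProduct_mulVec_nonneg v
  rw [Matrix.sub_mulVec, dotProduct_sub, Matrix.one_mulVec] at h0
  exact sub_nonneg.mp h0

lemma star_mulVec_dot (X : M) (v w : Fin n → ℂ) :
    star (Xᴴ *ᵥ v) ⬝ᵥ w = star v ⬝ᵥ (X *ᵥ w) := by
  rw [Matrix.star_mulVec, Matrix.conjTranspose_conjTranspose, ← Matrix.dotProduct_mulVec]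

/-- contraction duality: `XᴴX ≤ 1 → XXᴴ ≤ 1` -/
lemma contraction_dual {X : M} (h : pLE (Xᴴ * X) 1) : pLE (X * Xᴴ) 1 := by
  have hP : (X * Xᴴ).PosSemidef := Matrix.posSemidef_self_mul_conjTranspose X
  refine pLE_one_of_eigen hP fun i => ?_
  obtain ⟨v, hv, hAv⟩ := exists_eigenvector hP.1 i
  set μ : ℝ := hP.1.eigenvalues i with hμ
  have hμ0 : 0 ≤ μ := hP.eigenvalues_nonneg i
  set u : Fin n → ℂ := Xᴴ *ᵥ v with hu
  have key : star u ⬝ᵥ ((Xᴴ * X) *ᵥ u) ≤ star u ⬝ᵥ u := quad_le_of_pLE_one h u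
  have e1 : (Xᴴ * X) *ᵥ u = (μ:ℂ) • u := by
    have h' : (Xᴴ * X) *ᵥ (Xᴴ *ᵥ v) = Xᴴ *ᵥ ((X * Xᴴ) *ᵥ v) := by
      rw [Matrix.mulVec_mulVec, Matrix.mulVec_mulVec, mul_assoc]
    rw [hu, h', hAv, Matrix.mulVec_smul]
  have e2 : star u ⬝ᵥ u = (μ:ℂ) * (star v ⬝ᵥ v) := by
    rw [hu, star_mulVec_dot, Matrix.mulVec_mulVec, hAv, dotProduct_smul, smul_eq_mul]
  have e3 : star u ⬝ᵥ ((μ:ℂ) • u) = (μ:ℂ) * ((μ:ℂ) * (star v ⬝ᵥ v)) := by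
    rw [dotProduct_smul, smul_eq_mul, e2]
  rw [e1, e3, e2] at key
  rw [dot_star_self] at key
  set a : ℝ := ∑ j, Complex.normSq (v j) with ha
  have ha0 : 0 < a := dot_star_self_pos hv
  have key' : μ * (μ * a) ≤ μ * a := by
    have := Complex.le_def.mp key
    simpa using this.1
  by_contra hcon
  push_neg at hcon
  have h1 : 0 < μ * a := mul_pos (lt_trans one_pos hcon) ha0
  nlinarith

/-! ### Loewner-Heinz via midpoint induction -/

lemma mpowH_zero_pd {A : M} (hA : A.PosDef) : mpowH hA.posSemidef 0 = 1 := by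
  unfold mpowH
  have h2 : cfcH hA.posSemidef.1 (fpow 0) = cfcH hA.posSemidef.1 (fun _ => 1) := by
    refine cfcH_congr _ fun i => ?_
    unfold fpow
    rw [if_neg (ne_of_gt (posDef_eigenvalues_pos hA i)), Real.rpow_zero]
  exact h2.trans (cfcH_one _)

def GoodPD (t : ℝ) : Prop := ∀ (A B : M) (hA : A.PosDef) (hB : B.PosDef),
  pLE A B → pLE (mpowH hA.posSemidef t) (mpowH hB.posSemidef t)

lemma goodPD_zero : GoodPD (n := n) 0 := by
  intro A B hA hB _
  rw [mpowH_zero_pd hA, mpowH_zero_pd hB]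
  unfold pLE
  simpa using Matrix.PosSemidef.zero

lemma goodPD_one : GoodPD (n := n) 1 := by
  intro A B hA hB h
  rwa [mpowH_one, mpowH_one]

lemma goodPD_mid {a b : ℝ} (ha : GoodPD (n := n) a) (hb : GoodPD (n := n) b) :
    GoodPD (n := n) ((a + b) / 2) := by
  intro A B hA hB hAB
  set c : ℝ := (a + b) / 2 with hc
  set Ar : ℝ → M := fun t => mpowH hA.posSemidef t with hAr
  set Br : ℝ → M := fun t => mpowH hB.posSemidef t with hBr
  have hArmul : ∀ s t, Ar s * Ar t = Ar (s + t) := fun s t => mpowH_mul_mpowH _ s t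
  have hBrmul : ∀ s t, Br s * Br t = Br (s + t) := fun s t => mpowH_mul_mpowH _ s t
  have hBr0 : Br 0 = 1 := mpowH_zero_pd hB
  have hArH : ∀ t, (Ar t)ᴴ = Ar t := fun t => mpowH_herm hA.posSemidef t
  have hBrH : ∀ t, (Br t)ᴴ = Br t := fun t => mpowH_herm hB.posSemidef t
  set X : M := Br (-(a/2)) * Ar (a/2) with hX
  set Y : M := Ar (b/2) * Br (-(b/2)) with hY
  -- Yᴴ * Y ≤ 1
  have claimY : pLE (Yᴴ * Y) 1 := by
    have e : Yᴴ * Y = Br (-(b/2)) * Ar b * Br (-(b/2)) := by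
      rw [hY, conjTranspose_mul, hArH, hBrH]
      rw [mul_assoc, ← mul_assoc (Ar (b/2)), hArmul]
      rw [show b/2 + b/2 = b by ring, ← mul_assoc]
    have h1 := (hb A B hA hB hAB).conj (Br (-(b/2)))
    rw [hBrH] at h1
    rw [← e] at h1
    have e2 : Br (-(b/2)) * Br b * Br (-(b/2)) = 1 := by
      rw [hBrmul, hBrmul, show -(b/2) + b + -(b/2) = 0 by ring, hBr0]
    rw [e2] at h1
    exact h1
  -- X * Xᴴ ≤ 1, hence Xᴴ * X ≤ 1
  have claimXXt : pLE (X * Xᴴ) 1 := by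
    have e : X * Xᴴ = Br (-(a/2)) * Ar a * Br (-(a/2)) := by
      rw [hX, conjTranspose_mul, hArH, hBrH]
      rw [mul_assoc, ← mul_assoc (Ar (a/2)), hArmul]
      rw [show a/2 + a/2 = a by ring, ← mul_assoc]
    have h1 := (ha A B hA hB hAB).conj (Br (-(a/2)))
    rw [hBrH] at h1
    rw [← e] at h1
    have e2 : Br (-(a/2)) * Br a * Br (-(a/2)) = 1 := by
      rw [hBrmul, hBrmul, show -(a/2) + a + -(a/2) = 0 by ring, hBr0]
    rw [e2] at h1
    exact h1
  have claimX : pLE (Xᴴ * X) 1 := by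
    have := contraction_dual (X := Xᴴ)
    rw [conjTranspose_conjTranspose] at this
    exact this claimXXt
  -- T = X * Y, TᴴT ≤ 1
  set T : M := X * Y with hT
  have claimT : pLE (Tᴴ * T) 1 := by
    have e : Tᴴ * T = Yᴴ * (Xᴴ * X) * Y := by
      rw [hT, conjTranspose_mul]
      noncomm_ring
    have h1 := claimX.conj Y
    rw [← e] at h1
    have h2 : Yᴴ * 1 * Y = Yᴴ * Y := by rw [mul_one]
    rw [h2] at h1
    exact h1.trans claimY
  -- H := Br(-(c/2)) * Ar c * Br(-(c/2))
  set H : M := Br (-(c/2)) * Ar c * Br (-(c/2)) with hH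
  have hHpsd : H.PosSemidef := by
    have h0 := (mpowH_psd hA.posSemidef c).conjTranspose_mul_mul_same (Br (-(c/2)))
    rw [hBrH] at h0
    rw [hH]
    exact h0
  -- T in terms of H
  have hTH : T = Br ((c-a)/2) * H * Br ((a-c)/2) := by
    rw [hH, hT, hX, hY]
    rw [show (Br (-(a/2)) * Ar (a/2)) * (Ar (b/2) * Br (-(b/2)))
        = Br (-(a/2)) * (Ar (a/2) * Ar (b/2)) * Br (-(b/2)) by noncomm_ring,
      hArmul, show a/2 + b/2 = c by rw [hc]; ring]
    rw [show Br ((c-a)/2) * (Br (-(c/2)) * Ar c * Br (-(c/2))) * Br ((a-c)/2)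
        = (Br ((c-a)/2) * Br (-(c/2))) * Ar c * (Br (-(c/2)) * Br ((a-c)/2)) by noncomm_ring,
      hBrmul, hBrmul, show (c-a)/2 + -(c/2) = -(a/2) by ring,
      show -(c/2) + (a-c)/2 = -(b/2) by rw [hc]; ring]
  -- eigenvalues of H are ≤ 1
  have heig : ∀ i, hHpsd.1.eigenvalues i ≤ 1 := by
    intro i
    obtain ⟨v, hv, hHv⟩ := exists_eigenvector hHpsd.1 i
    set μ : ℝ := hHpsd.1.eigenvalues i with hμ
    have hμ0 : 0 ≤ μ := hHpsd.eigenvalues_nonneg i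
    set w : Fin n → ℂ := Br ((c-a)/2) *ᵥ v with hw
    have hwv : Br ((a-c)/2) *ᵥ w = v := by
      rw [hw, Matrix.mulVec_mulVec, hBrmul, show (a-c)/2 + (c-a)/2 = 0 by ring, hBr0,
        Matrix.one_mulVec]
    have hw0 : w ≠ 0 := by
      intro h0
      rw [h0, Matrix.mulVec_zero] at hwv
      exact hv hwv.symm
    have hTw : T *ᵥ w = (μ:ℂ) • w := by
      rw [hTH, hw, Matrix.mulVec_mulVec,
        show Br ((c-a)/2) * H * Br ((a-c)/2) * Br ((c-a)/2)
          = Br ((c-a)/2) * H * (Br ((a-c)/2) * Br ((c-a)/2)) by noncomm_ring,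
        hBrmul, show (a-c)/2 + (c-a)/2 = 0 by ring, hBr0, mul_one,
        ← Matrix.mulVec_mulVec, hHv, Matrix.mulVec_smul]
    have key := quad_le_of_pLE_one claimT w
    have e4 : star w ⬝ᵥ ((Tᴴ * T) *ᵥ w) = star (T *ᵥ w) ⬝ᵥ (T *ᵥ w) := by
      rw [← Matrix.mulVec_mulVec]
      have := star_mulVec_dot Tᴴ w (T *ᵥ w)
      rw [conjTranspose_conjTranspose] at this
      exact this.symm
    rw [e4, hTw] at key
    have e5 : star ((μ:ℂ) • w) ⬝ᵥ ((μ:ℂ) • w) = (μ:ℂ) * ((μ:ℂ) * (star w ⬝ᵥ w)) := by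
      rw [star_smul, smul_dotProduct, dotProduct_smul]
      simp [Complex.conj_ofReal, mul_assoc]
    rw [e5, dot_star_self] at key
    set α : ℝ := ∑ j, Complex.normSq (w j) with hα
    have hα0 : 0 < α := dot_star_self_pos hw0
    have key' : μ * (μ * α) ≤ α := by
      have := Complex.le_def.mp key
      simpa using this.1
    by_contra hcon
    push_neg at hcon
    have h2 : α < μ * α := by nlinarith
    have h3 : μ * α < μ * (μ * α) := by
      nlinarith [mul_pos (mul_pos (lt_trans one_pos hcon) hα0) (sub_pos.mpr hcon)]
    linarith
  have hH1 : pLE H 1 := pLE_one_of_eigen hHpsd heig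
  -- conjugate back
  have final := hH1.conj (Br (c/2))
  have e1 : (Br (c/2))ᴴ * H * Br (c/2) = Ar c := by
    rw [hBrH, hH,
      show Br (c/2) * (Br (-(c/2)) * Ar c * Br (-(c/2))) * Br (c/2)
        = (Br (c/2) * Br (-(c/2))) * Ar c * (Br (-(c/2)) * Br (c/2)) by noncomm_ring,
      hBrmul, hBrmul, show c/2 + -(c/2) = 0 by ring, show -(c/2) + c/2 = 0 by ring, hBr0,
      one_mul, mul_one]
  have e2 : (Br (c/2))ᴴ * 1 * Br (c/2) = Br c := by
    rw [hBrH, mul_one, hBrmul, show c/2 + c/2 = c by ring]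
  rw [e1, e2] at final
  exact final

lemma goodPD_dyadic : ∀ m k : ℕ, k ≤ 2^m → GoodPD (n := n) ((k : ℝ) / 2^m) := by
  intro m
  induction m with
  | zero =>
    intro k hk
    interval_cases k
    · simpa using goodPD_zero
    · simpa using goodPD_one
  | succ m ih =>
    intro k hk
    have h2 : (2:ℕ)^(m+1) = 2 * 2^m := by ring
    rcases Nat.even_or_odd k with ⟨j, hj⟩ | ⟨j, hj⟩
    · have hjle : j ≤ 2^m := by omega
      have : ((k : ℝ)) / 2^(m+1) = (j:ℝ) / 2^m := by
        subst hj
        push_cast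
        rw [pow_succ]
        field_simp
        ring
      rw [this]
      exact ih j hjle
    · have hjle : j + 1 ≤ 2^m := by omega
      have : ((k : ℝ)) / 2^(m+1) = ((j:ℝ)/2^m + ((j+1:ℕ):ℝ)/2^m) / 2 := by
        subst hj
        push_cast
        rw [pow_succ]
        field_simp
        ring
      rw [this]
      exact goodPD_mid (ih j (by omega)) (ih (j+1) hjle)

/-! ### limits -/

open Filter Topology

lemma cfcH_entry_tendsto {A : M} (hA : A.IsHermitian) {f : ℕ → ℝ → ℝ} {g : ℝ → ℝ}
    (h : ∀ l, Tendsto (fun k => f k (hA.eigenvalues l)) atTop (𝓝 (g (hA.eigenvalues l))))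
    (i j : Fin n) :
    Tendsto (fun k => (cfcH hA (f k)) i j) atTop (𝓝 ((cfcH hA g) i j)) := by
  have entry : ∀ (p : ℝ → ℝ), (cfcH hA p) i j
      = ∑ l, (hA.eigenvectorUnitary : M) i l * ((p (hA.eigenvalues l) : ℝ) : ℂ)
          * (star (hA.eigenvectorUnitary : M)) l j := by
    intro p
    unfold cfcH Matrix.IsHermitian.cfc
    simp only [Unitary.conjStarAlgAut_apply]
    rw [Matrix.mul_apply]
    refine Finset.sum_congr rfl fun l _ => ?_
    rw [Matrix.mul_diagonal]
    rfl
  simp only [entry]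
  refine tendsto_finset_sum _ fun l _ => ?_
  exact (((Complex.continuous_ofReal.continuousAt.tendsto.comp (h l)).const_mul _).mul_const _)

lemma psd_of_tendsto {Mk : ℕ → M} {Mlim : M} (hherm : Mlim.IsHermitian)
    (hpsd : ∀ k, (Mk k).PosSemidef)
    (h : ∀ i j, Tendsto (fun k => Mk k i j) atTop (𝓝 (Mlim i j))) : Mlim.PosSemidef := by
  refine Matrix.PosSemidef.of_dotProduct_mulVec_nonneg hherm fun x => ?_
  have hq : Tendsto (fun k => star x ⬝ᵥ (Mk k *ᵥ x)) atTop (𝓝 (star x ⬝ᵥ (Mlim *ᵥ x))) := by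
    simp only [dotProduct, Matrix.mulVec, dotProduct]
    refine tendsto_finset_sum _ fun i _ => ?_
    refine Tendsto.const_mul _ (tendsto_finset_sum _ fun j _ => ?_)
    exact (h i j).mul_const _
  have him : (star x ⬝ᵥ (Mlim *ᵥ x)).im = 0 := by
    have h1 : Tendsto (fun k => (star x ⬝ᵥ (Mk k *ᵥ x)).im) atTop
        (𝓝 ((star x ⬝ᵥ (Mlim *ᵥ x)).im)) := (Complex.continuous_im.continuousAt.tendsto.comp hq)
    have h2 : ∀ k, (star x ⬝ᵥ (Mk k *ᵥ x)).im = 0 := fun k =>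
      ((Complex.le_def.mp ((hpsd k).dotProduct_mulVec_nonneg x)).2).symm
    simp only [h2] at h1
    exact (tendsto_nhds_unique tendsto_const_nhds h1).symm
  have hre : 0 ≤ (star x ⬝ᵥ (Mlim *ᵥ x)).re := by
    have h1 : Tendsto (fun k => (star x ⬝ᵥ (Mk k *ᵥ x)).re) atTop
        (𝓝 ((star x ⬝ᵥ (Mlim *ᵥ x)).re)) := (Complex.continuous_re.continuousAt.tendsto.comp hq)
    exact ge_of_tendsto' h1 fun k => (Complex.le_def.mp ((hpsd k).dotProduct_mulVec_nonneg x)).1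
  rw [Complex.le_def]
  simp [him, hre]

lemma dyadic_approx (s : ℝ) (hs0 : 0 ≤ s) (hs1 : s ≤ 1) :
    ∃ N : ℕ → ℕ, (∀ k, N k ≤ 2^k) ∧
      Tendsto (fun k => (N k : ℝ) / 2^k) atTop (𝓝 s) := by
  refine ⟨fun k => Nat.floor (s * 2^k), fun k => ?_, ?_⟩
  · have h1 : s * 2^k ≤ 2^k := by nlinarith [pow_pos (by norm_num : (0:ℝ) < 2) k]
    calc Nat.floor (s * 2^k) ≤ Nat.floor ((2:ℝ)^k) := Nat.floor_le_floor h1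
    _ = 2^k := by
        rw [show ((2:ℝ)^k) = ((2^k : ℕ) : ℝ) by push_cast; ring, Nat.floor_natCast]
  · have hpow : ∀ k : ℕ, (0:ℝ) < 2^k := fun k => pow_pos (by norm_num) k
    have hub : ∀ k, (Nat.floor (s * 2^k) : ℝ) / 2^k ≤ s := by
      intro k
      rw [div_le_iff₀ (hpow k)]
      exact Nat.floor_le (by positivity)
    have hlb : ∀ k, s - (1/2)^k ≤ (Nat.floor (s * 2^k) : ℝ) / 2^k := by
      intro k
      rw [sub_le_iff_le_add, div_add' _ _ _ (ne_of_gt (hpow k)), le_div_iff₀ (hpow k)]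
      have := Nat.lt_floor_add_one (s * 2^k)
      have h14 : (1/2:ℝ)^k * 2^k = 1 := by
        rw [← mul_pow]
        norm_num
      nlinarith
    have hlow : Tendsto (fun k : ℕ => s - (1/2:ℝ)^k) atTop (𝓝 s) := by
      have := tendsto_pow_atTop_nhds_zero_of_lt_one (by norm_num : (0:ℝ) ≤ 1/2)
        (by norm_num : (1/2:ℝ) < 1)
      simpa using tendsto_const_nhds.sub this
    exact tendsto_of_tendsto_of_tendsto_of_le_of_le hlow tendsto_const_nhds hlb
      (fun k => hub k)

lemma goodPD_real {s : ℝ} (hs0 : 0 ≤ s) (hs1 : s ≤ 1) : GoodPD (n := n) s := by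
  intro A B hA hB hAB
  obtain ⟨N, hN, hNs⟩ := dyadic_approx s hs0 hs1
  have hk : ∀ k, pLE (mpowH hA.posSemidef ((N k : ℝ)/2^k)) (mpowH hB.posSemidef ((N k : ℝ)/2^k)) :=
    fun k => goodPD_dyadic k (N k) (hN k) A B hA hB hAB
  refine psd_of_tendsto ((mpowH_herm hB.posSemidef s).sub (mpowH_herm hA.posSemidef s))
    (fun k => hk k) fun i j => ?_
  have key : ∀ (C : M) (hC : C.PosDef), ∀ i j : Fin n,
      Tendsto (fun k => (mpowH hC.posSemidef ((N k : ℝ)/2^k)) i j) atTop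
        (𝓝 ((mpowH hC.posSemidef s) i j)) := by
    intro C hC i j
    refine cfcH_entry_tendsto _ (fun l => ?_) i j
    have hl : 0 < hC.posSemidef.1.eigenvalues l := posDef_eigenvalues_pos hC l
    have heq : ∀ t : ℝ, fpow t (hC.posSemidef.1.eigenvalues l)
        = Real.exp (Real.log (hC.posSemidef.1.eigenvalues l) * t) := by
      intro t
      unfold fpow
      rw [if_neg (ne_of_gt hl), Real.rpow_def_of_pos hl]
    simp only [heq]
    exact (Real.continuous_exp.continuousAt.tendsto.comp
      ((tendsto_const_nhds.mul hNs)))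
  have h1 := key A hA i j
  have h2 := key B hB i j
  simpa [Matrix.sub_apply] using h2.sub h1

/-! ### extension to psd via perturbation -/

lemma contOn_fin (f : ℝ → ℝ) {s : Set ℝ} (hs : s.Finite) : ContinuousOn f s :=
  hs.continuousOn f

lemma cfcH_shift {A : M} (hA : A.IsHermitian) (f : ℝ → ℝ) (c : ℝ)
    (hB : (A + (c : ℝ) • 1).IsHermitian) :
    cfcH hB f = cfcH hA (fun x => f (x + c)) := by
  have h1 : cfcH hB f = cfc f (A + (c:ℝ) • 1) := (Matrix.IsHermitian.cfc_eq hB f).symm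
  have h2 : cfcH hA (fun x => f (x + c)) = cfc (fun x => f (x + c)) A :=
    (Matrix.IsHermitian.cfc_eq hA _).symm
  rw [h1, h2]
  have hfin : (spectrum ℝ A).Finite := A.finite_real_spectrum
  have hshift : cfc (fun x : ℝ => x + c) A = A + (c:ℝ) • 1 := by
    rw [cfc_add (a := A) (f := fun x : ℝ => x) (g := fun _ : ℝ => c)
      (contOn_fin _ hfin) (contOn_fin _ hfin)]
    rw [cfc_id' ℝ A, cfc_const c A]
    rw [Algebra.algebraMap_eq_smul_one]
  calc cfc f (A + (c:ℝ) • 1) = cfc f (cfc (fun x : ℝ => x + c) A) := by rw [hshift]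
    _ = cfc (f ∘ (fun x : ℝ => x + c)) A :=
        (cfc_comp f (fun x : ℝ => x + c) A hA
          (contOn_fin _ (hfin.image _)) (contOn_fin _ hfin)).symm
    _ = cfc (fun x => f (x + c)) A := rfl

lemma herm_add_smul_one {A : M} (hA : A.IsHermitian) (c : ℝ) : (A + (c : ℝ) • 1).IsHermitian := by
  unfold Matrix.IsHermitian
  rw [conjTranspose_add, hA.eq]
  congr 1
  rw [conjTranspose_smul, conjTranspose_one]
  simp

lemma posDef_add_smul_one {A : M} (hA : A.PosSemidef) {c : ℝ} (hc : 0 < c) :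
    (A + (c : ℝ) • 1).PosDef := by
  refine Matrix.PosDef.of_dotProduct_mulVec_pos (herm_add_smul_one hA.1 c) fun x hx => ?_
  have h1 := hA.dotProduct_mulVec_nonneg x
  have h2 : star x ⬝ᵥ ((A + (c:ℝ) • 1) *ᵥ x) = star x ⬝ᵥ (A *ᵥ x) + (c:ℂ) * (star x ⬝ᵥ x) := by
    rw [Matrix.add_mulVec, dotProduct_add]
    congr 1
    have : ((c:ℝ) • (1:M)) *ᵥ x = (c:ℂ) • x := by
      funext i
      simp [Matrix.mulVec, dotProduct, Matrix.smul_apply, Matrix.one_apply, Complex.real_smul,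
        Finset.sum_ite_eq, mul_comm]
    rw [this, dotProduct_smul, smul_eq_mul]
  rw [h2]
  have h3 : 0 < (c:ℂ) * (star x ⬝ᵥ x) := by
    rw [dot_star_self]
    rw [show ((c:ℂ) * ((∑ i, Complex.normSq (x i) : ℝ) : ℂ)) =
      (((c * ∑ i, Complex.normSq (x i) : ℝ)) : ℂ) by push_cast; ring]
    rw [Complex.lt_def]
    constructor
    · simp
      exact mul_pos hc (dot_star_self_pos hx)
    · simp
  exact lt_add_of_le_of_pos h1 h3

lemma mpow_mono {A B : M} (hA : A.PosSemidef) (hB : B.PosSemidef) (hAB : pLE A B)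
    {s : ℝ} (hs0 : 0 < s) (hs1 : s ≤ 1) : pLE (mpowH hA s) (mpowH hB s) := by
  set ε : ℕ → ℝ := fun k => 1/(k+1 : ℝ) with hε
  have hεpos : ∀ k, 0 < ε k := fun k => by positivity
  have hε0 : Tendsto ε atTop (𝓝 0) := tendsto_one_div_add_atTop_nhds_zero_nat
  have hk : ∀ k, pLE (cfcH hA.1 (fun x => fpow s (x + ε k)))
      (cfcH hB.1 (fun x => fpow s (x + ε k))) := by
    intro k
    have hApd := posDef_add_smul_one hA (hεpos k)
    have hBpd := posDef_add_smul_one hB (hεpos k)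
    have hABk : pLE (A + (ε k : ℝ) • 1) (B + (ε k : ℝ) • 1) := by
      unfold pLE
      rw [show B + (ε k : ℝ) • 1 - (A + (ε k : ℝ) • 1) = B - A by abel]
      exact hAB
    have := goodPD_real hs0.le hs1 _ _ hApd hBpd hABk
    unfold mpowH at this
    rwa [cfcH_shift hA.1 (fpow s) (ε k) hApd.posSemidef.1,
      cfcH_shift hB.1 (fpow s) (ε k) hBpd.posSemidef.1] at this
  refine psd_of_tendsto ((mpowH_herm hB s).sub (mpowH_herm hA s)) (fun k => hk k) fun i j => ?_
  have key : ∀ (C : M) (hC : C.PosSemidef), ∀ i j : Fin n,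
      Tendsto (fun k => (cfcH hC.1 (fun x => fpow s (x + ε k))) i j) atTop
        (𝓝 ((mpowH hC s) i j)) := by
    intro C hC i j
    refine cfcH_entry_tendsto _ (fun l => ?_) i j
    have hl : 0 ≤ hC.1.eigenvalues l := hC.eigenvalues_nonneg l
    have heq : ∀ k, fpow s (hC.1.eigenvalues l + ε k) = (hC.1.eigenvalues l + ε k) ^ s := by
      intro k
      unfold fpow
      rw [if_neg (ne_of_gt (by linarith [hεpos k]))]
    simp only [heq]
    have hcont : ContinuousAt (fun x : ℝ => x ^ s) (hC.1.eigenvalues l) :=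
      Real.continuousAt_rpow_const _ _ (Or.inr hs0.le)
    have harg : Tendsto (fun k => hC.1.eigenvalues l + ε k) atTop (𝓝 (hC.1.eigenvalues l)) := by
      simpa using tendsto_const_nhds.add hε0
    have := hcont.tendsto.comp harg
    have hval : (hC.1.eigenvalues l) ^ s = fpow s (hC.1.eigenvalues l) := by
      unfold fpow
      split
      · rename_i h0
        rw [h0, Real.zero_rpow (ne_of_gt hs0)]
      · rfl
    rw [hval] at this
    exact this
  have h1 := key A hA i j
  have h2 := key B hB i j
  simpa [Matrix.sub_apply] using h2.sub h1
/-! ### trace norm and positive part -/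

lemma sqrt_eq_abs_cfcH {D : M} (hD : D.IsHermitian) :
    (Matrix.posSemidef_conjTranspose_mul_self D).sqrt = cfcH hD (fun x => |x|) := by
  rw [sqrt_eq_cfcH, cfcH, cfcH, ← Matrix.IsHermitian.cfc_eq, ← Matrix.IsHermitian.cfc_eq]
  have hfin : (spectrum ℝ D).Finite := D.finite_real_spectrum
  have hsq : Dᴴ * D = cfc (fun x : ℝ => x * x) D := by
    rw [cfc_mul (a := D) (fun x : ℝ => x) (fun x : ℝ => x) (contOn_fin _ hfin) (contOn_fin _ hfin),
      cfc_id' ℝ D, hD.eq]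
  rw [hsq]
  refine (cfc_comp (fun x : ℝ => √x) (fun x : ℝ => x * x) D hD
    (contOn_fin _ (hfin.image _)) (contOn_fin _ hfin)).symm.trans ?_
  congr 1
  funext x
  exact Real.sqrt_mul_self_eq_abs x

/-! ### endpoint bound -/

lemma endpoint_bound {A B P Q : M} (hA : A.PosSemidef) (hB : B.PosSemidef)
    (hP : P.PosSemidef) (hQ : Q.PosSemidef) (hPQ : P - Q = A - B) :
    (A.trace).re - (P.trace).re ≤ ((A * mpowH hB 0).trace).re := by
  set p : M := mpowH hB 0 with hp
  have hppsd : p.PosSemidef := mpowH_psd hB 0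
  have h1p : (1 - p).PosSemidef := by
    have e : cfcH hB.1 (fun x => 1 - fpow 0 x) = 1 - p := by
      rw [← cfcH_sub hB.1 (fun _ => 1) (fpow 0), cfcH_one]
      rfl
    rw [← e]
    refine cfcH_posSemidef _ fun i => ?_
    unfold fpow
    split
    · norm_num
    · rw [Real.rpow_zero]
      norm_num
  have hBp : B * p = B := by
    have h2 : mpowH hB 1 * mpowH hB 0 = mpowH hB (1 + 0) := mpowH_mul_mpowH _ _ _
    rw [mpowH_one] at h2
    norm_num at h2
    rw [hp, h2]
    exact (mpowH_one hB)
  have e1 : A * (1 - p) = A - A * p := by rw [mul_sub, mul_one]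
  have e2 : B * (1 - p) = 0 := by rw [mul_sub, mul_one, hBp, sub_self]
  have e3 : (A - B) * (1 - p) = A * (1 - p) := by rw [sub_mul, e2, sub_zero]
  have e4 : (P - Q) * (1 - p) = P * (1 - p) - Q * (1 - p) := by rw [sub_mul]
  have e5 : P * (1 - p) = P - P * p := by rw [mul_sub, mul_one]
  -- trace inequalities
  have t1 : 0 ≤ ((Q * (1 - p)).trace).re := psd_trace_mul_re_nonneg hQ h1p
  have t2 : 0 ≤ ((P * p).trace).re := psd_trace_mul_re_nonneg hP hppsd
  have main : ((A * (1 - p)).trace).re ≤ (P.trace).re := by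
    have : A * (1 - p) = P * (1 - p) - Q * (1 - p) := by rw [← e4, hPQ, e3]
    rw [this, Matrix.trace_sub, Complex.sub_re, e5, Matrix.trace_sub, Complex.sub_re]
    linarith
  rw [e1, Matrix.trace_sub, Complex.sub_re] at main
  linarith
end Aud

theorem stmt0 {n : ℕ} {A B : Matrix (Fin n) (Fin n) ℂ}
    (hA : A.PosSemidef) (hB : B.PosSemidef) {s : ℝ} (hs : s ∈ Set.Icc (0:ℝ) 1) :
    (1/2) * (((A + B).trace).re - traceNorm (A - B)) ≤
      ((mpow hA s * mpow hB (1 - s)).trace).re := by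
  obtain ⟨hs0, hs1⟩ := hs
  have hD : (A - B).IsHermitian := hA.1.sub hB.1
  set P := Aud.cfcH hD (fun x => max x 0) with hPdef
  set Q := Aud.cfcH hD (fun x => max (-x) 0) with hQdef
  have hPpsd : P.PosSemidef := Aud.cfcH_posSemidef _ fun i => le_max_right _ _
  have hQpsd : Q.PosSemidef := Aud.cfcH_posSemidef _ fun i => le_max_right _ _
  have hPQ : P - Q = A - B := by
    rw [hPdef, hQdef, Aud.cfcH_sub]
    have e : Aud.cfcH hD (fun x => max x 0 - max (-x) 0) = Aud.cfcH hD (fun x => x) :=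
      Aud.cfcH_congr _ fun i => by
        rcases le_total (hD.eigenvalues i) 0 with h | h
        · rw [max_eq_right h, max_eq_left (neg_nonneg.mpr h)]
          ring
        · rw [max_eq_left h, max_eq_right (neg_nonpos.mpr h)]
          ring
    rw [e, Aud.cfcH_id]
  have htn : traceNorm (A - B) = (P.trace).re + (Q.trace).re := by
    unfold traceNorm
    rw [Aud.sqrt_eq_abs_cfcH hD, Aud.cfcH_trace_re, hPdef, hQdef, Aud.cfcH_trace_re,
      Aud.cfcH_trace_re, ← Finset.sum_add_distrib]
    refine Finset.sum_congr rfl fun i _ => ?_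
    rcases le_total (hD.eigenvalues i) 0 with h | h
    · rw [abs_of_nonpos h, max_eq_right h, max_eq_left (neg_nonneg.mpr h)]
      ring
    · rw [abs_of_nonneg h, max_eq_left h, max_eq_right (neg_nonpos.mpr h)]
      ring
  have htr : ((A+B).trace).re = (A.trace).re + (B.trace).re := by
    rw [Matrix.trace_add, Complex.add_re]
  have hDtr : (A.trace).re - (B.trace).re = (P.trace).re - (Q.trace).re := by
    have h := congrArg (fun X : Matrix (Fin n) (Fin n) ℂ => (X.trace).re) hPQ
    simpa [Matrix.trace_sub, Complex.sub_re] using h.symm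
  suffices h : (A.trace).re - (P.trace).re ≤ ((mpow hA s * mpow hB (1 - s)).trace).re by
    rw [htr, htn]
    linarith
  rcases eq_or_lt_of_le hs0 with h0 | h0
  · -- s = 0
    subst h0
    rw [show (1:ℝ) - 0 = 1 by norm_num]
    have hQP : Q - P = B - A := by
      calc Q - P = -(P - Q) := by abel
        _ = -(A - B) := by rw [hPQ]
        _ = B - A := by abel
    have hswap := Aud.endpoint_bound hB hA hQpsd hPpsd hQP
    have e : ((mpow hA 0 * mpow hB 1).trace).re = ((B * Aud.mpowH hA 0).trace).re := by
      show ((Aud.mpowH hA 0 * Aud.mpowH hB 1).trace).re = _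
      rw [Aud.mpowH_one hB, Matrix.trace_mul_comm]
    rw [e]
    linarith
  rcases eq_or_lt_of_le hs1 with h1 | h1
  · -- s = 1
    subst h1
    rw [show (1:ℝ) - 1 = 0 by norm_num]
    have h := Aud.endpoint_bound hA hB hPpsd hQpsd hPQ
    have e : mpow hA 1 * mpow hB 0 = A * Aud.mpowH hB 0 := by
      show Aud.mpowH hA 1 * Aud.mpowH hB 0 = _
      rw [Aud.mpowH_one hA]
    rw [e]
    exact h
  · -- 0 < s < 1
    set C := B + P with hCdef
    have hCpsd : C.PosSemidef := hB.add hPpsd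
    have hAC : Aud.pLE A C := by
      have e : C - A = Q := by
        calc C - A = P - (A - B) := by rw [hCdef]; abel
          _ = P - (P - Q) := by rw [hPQ]
          _ = Q := by abel
      unfold Aud.pLE
      rw [e]
      exact hQpsd
    have hBC : Aud.pLE B C := by
      have e : C - B = P := by rw [hCdef]; abel
      unfold Aud.pLE
      rw [e]
      exact hPpsd
    have hCtr : (C.trace).re = (B.trace).re + (P.trace).re := by
      rw [hCdef, Matrix.trace_add, Complex.add_re]
    have h1s0 : (0:ℝ) < 1 - s := by linarith
    have h1s1 : 1 - s ≤ 1 := by linarith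
    set a := Aud.mpowH hA s
    set a' := Aud.mpowH hA (1-s)
    set b := Aud.mpowH hB s
    set b' := Aud.mpowH hB (1-s)
    set c := Aud.mpowH hCpsd s
    set c' := Aud.mpowH hCpsd (1-s)
    have lh2 : Aud.pLE a c := Aud.mpow_mono hA hCpsd hAC h0 hs1
    have lh1 : Aud.pLE a' c' := Aud.mpow_mono hA hCpsd hAC h1s0 h1s1
    have lh4 : Aud.pLE b' c' := Aud.mpow_mono hB hCpsd hBC h1s0 h1s1
    have lh3 : Aud.pLE b c := Aud.mpow_mono hB hCpsd hBC h0 hs1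
    have prodeq : ∀ (X : Matrix (Fin n) (Fin n) ℂ) (hX : X.PosSemidef),
        Aud.mpowH hX s * Aud.mpowH hX (1-s) = X := by
      intro X hX
      rw [Aud.mpowH_mul_mpowH, show s + (1-s) = 1 by ring, Aud.mpowH_one]
    have t1 : ((a * a').trace).re ≤ ((a * c').trace).re :=
      Aud.trace_mul_mono' lh1 (Aud.mpowH_psd hA s)
    have t2 : ((a * c').trace).re - ((a * b').trace).re
        ≤ ((c * c').trace).re - ((c * b').trace).re := by
      have u := Aud.trace_mul_mono lh2 (lh4 : (c' - b').PosSemidef)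
      rw [mul_sub, mul_sub, Matrix.trace_sub, Matrix.trace_sub, Complex.sub_re,
        Complex.sub_re] at u
      linarith
    have t3 : ((b * b').trace).re ≤ ((c * b').trace).re :=
      Aud.trace_mul_mono lh3 (Aud.mpowH_psd hB (1-s))
    have ea : ((a * a').trace).re = (A.trace).re := by rw [prodeq A hA]
    have ec : ((c * c').trace).re = (C.trace).re := by rw [prodeq C hCpsd]
    have eb : ((b * b').trace).re = (B.trace).re := by rw [prodeq B hB]
    show (A.trace).re - (P.trace).re ≤ ((a * b').trace).re
    linarith
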